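/- Let (k₁, k₂, k₃) = (3, 3, 3) and w = (x⁻³, (1/2)·x⁻², (1/2)·x⁻¹, (3/8)·x⁻², −(3/4)·x⁻³, (9/4)·x⁻⁴) (components in the order (a₁₂, a₁₃, a₂₃, b₁, b₂, b₃)). Then E″(w) ∈ B, F″(w) ∈ B, w ∉ B, and every z ∈ V with E″(z) ∈ B and F″(z) ∈ B satisfies z ∈ ℂ·w + B. In other words, the 𝔰″-invariant part of H¹(ℂℙ¹, T₂) is one-dimensional, spanned by the class of w. -/

import Mathlib

noncomputable section

open LaurentPolynomial

/-- `L = ℂ[x, x⁻¹]`, the Laurent polynomials over `ℂ`. -/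
abbrev L : Type := LaurentPolynomial ℂ

/-- The coefficient of `x^n` in a Laurent polynomial. -/
def coeffL (p : L) (n : ℤ) : ℂ := (AddMonoidAlgebra.coeff p : ℤ →₀ ℂ) n

lemma coeffL_zero (n : ℤ) : coeffL 0 n = 0 := rfl

lemma coeffL_add (a b : L) (n : ℤ) : coeffL (a + b) n = coeffL a n + coeffL b n := by
  unfold coeffL; erw [Finsupp.add_apply]; rfl

lemma coeffL_smul (c : ℂ) (a : L) (n : ℤ) : coeffL (c • a) n = c * coeffL a n := by
  unfold coeffL; erw [Finsupp.smul_apply]; rfl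

/-- `L₊`: Laurent polynomials involving only nonnegative powers of `x`. -/
def Lplus : Submodule ℂ L where
  carrier := {p | ∀ n : ℤ, n < 0 → coeffL p n = 0}
  zero_mem' := fun n _ => coeffL_zero n
  add_mem' := by intro a b ha hb n hn; rw [coeffL_add, ha n hn, hb n hn, add_zero]
  smul_mem' := by intro c p hp n hn; rw [coeffL_smul, hp n hn, mul_zero]

/-- `L₋`: Laurent polynomials involving only nonpositive powers of `x`. -/
def Lminus : Submodule ℂ L where
  carrier := {p | ∀ n : ℤ, 0 < n → coeffL p n = 0}
  zero_mem' := fun n _ => coeffL_zero n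
  add_mem' := by intro a b ha hb n hn; rw [coeffL_add, ha n hn, hb n hn, add_zero]
  smul_mem' := by intro c p hp n hn; rw [coeffL_smul, hp n hn, mul_zero]

/-- The derivative `d/dx` on Laurent polynomials. -/
def D (p : L) : L := Finsupp.sum (AddMonoidAlgebra.coeff p : ℤ →₀ ℂ) fun n a => ((n : ℂ) * a) • T (n - 1)

/-- `V = L⁶`, the model of Čech 1-cochains with values in `T₂`: a tuple
`v = (a₁₂, a₁₃, a₂₃, b₁, b₂, b₃)` (components `v 0, …, v 5`) encodes the
vector field `Σ_{i<j} a_{ij}(x)ξᵢξⱼ∂/∂x + Σ_t b_t(x)ξ₁ξ₂ξ₃∂/∂ξ_t` on `U₀ ∩ U₁`. -/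
abbrev V : Type := Fin 6 → L

/-- `B₀ = (L₊)⁶`: cochains holomorphic in `U₀`. -/
def B0 : Submodule ℂ V := Submodule.pi Set.univ fun _ => Lplus

/-- The linear map `v ↦ x^m · (v i)`. -/
def cndA (m : ℤ) (i : Fin 6) : V →ₗ[ℂ] L :=
  (LinearMap.mulLeft ℂ (T m)).comp (LinearMap.proj i)

/-- The linear map `v ↦ x^m · (v i − c·x⁻¹·(v j))`. -/
def cndB (m : ℤ) (c : ℂ) (i j : Fin 6) : V →ₗ[ℂ] L :=
  (LinearMap.mulLeft ℂ (T m)).comp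
    (LinearMap.proj i - c • (LinearMap.mulLeft ℂ (T (-1))).comp (LinearMap.proj j))

/-- `B₁`: cochains holomorphic in `U₁`, i.e. `v` with
`x^(kᵢ+kⱼ−2)·a_{ij} ∈ L₋` for all `i < j` and
`x^(d−k_t)·(b_t − σ_t·k_t·x⁻¹·a_{(t)}) ∈ L₋` for `t = 1, 2, 3`
(σ₁ = 1, σ₂ = −1, σ₃ = 1, a₍₁₎ = a₂₃, a₍₂₎ = a₁₃, a₍₃₎ = a₁₂, d = k₁+k₂+k₃). -/
def B1 (k1 k2 k3 : ℤ) : Submodule ℂ V :=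
  Lminus.comap (cndA (k1 + k2 - 2) 0) ⊓
  Lminus.comap (cndA (k1 + k3 - 2) 1) ⊓
  Lminus.comap (cndA (k2 + k3 - 2) 2) ⊓
  Lminus.comap (cndB (k2 + k3) ((k1 : ℂ)) 3 2) ⊓
  Lminus.comap (cndB (k1 + k3) (-(k2 : ℂ)) 4 1) ⊓
  Lminus.comap (cndB (k1 + k2) ((k3 : ℂ)) 5 0)

/-- The coboundary subspace `B = B₀ + B₁`. -/
def B (k1 k2 k3 : ℤ) : Submodule ℂ V := B0 ⊔ B1 k1 k2 k3

/-- Action of `e = ∂/∂x` on cocycles: the componentwise derivative. -/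
def Eop : V → V := fun v i => D (v i)

/-- Action of `f = ∂/∂y` on cocycles, with components
`a_{ij} ↦ (2 − kᵢ − kⱼ)·x·a_{ij} − x²·a_{ij}′` and
`b_t ↦ σ_t·k_t·a₍ₜ₎ − (d − k_t)·x·b_t − x²·b_t′`. -/
def Fop (k1 k2 k3 : ℤ) : V → V := fun v =>
  ![((2 - k1 - k2 : ℤ) : ℂ) • (T 1 * v 0) - T 2 * D (v 0),
    ((2 - k1 - k3 : ℤ) : ℂ) • (T 1 * v 1) - T 2 * D (v 1),
    ((2 - k2 - k3 : ℤ) : ℂ) • (T 1 * v 2) - T 2 * D (v 2),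
    (k1 : ℂ) • v 2 - ((k2 + k3 : ℤ) : ℂ) • (T 1 * v 3) - T 2 * D (v 3),
    -((k2 : ℂ) • v 1) - ((k1 + k3 : ℤ) : ℂ) • (T 1 * v 4) - T 2 * D (v 4),
    (k3 : ℂ) • v 0 - ((k1 + k2 : ℤ) : ℂ) • (T 1 * v 5) - T 2 * D (v 5)]

/-- `N(v) = (0, 0, a₁₃, −b₂, 0, 0)`; `e′ = ∂/∂x + ξ₂∂/∂ξ₁` acts by `E′ = E + N`. -/
def Nop : V → V := fun v => ![0, 0, v 1, -v 4, 0, 0]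

/-- `M(v) = (0, a₂₃, 0, 0, −b₁, 0)`; `f′ = ∂/∂y + η₁∂/∂η₂` acts by `F′ = F + M`. -/
def Mop : V → V := fun v => ![0, v 2, 0, 0, -v 3, 0]

/-- The action `E′ = E + N` of `e′ = ∂/∂x + ξ₂∂/∂ξ₁`. -/
def E'op : V → V := fun v => Eop v + Nop v

/-- The action `F′ = F + M` of `f′ = ∂/∂y + η₁∂/∂η₂`. -/
def F'op (k1 k2 k3 : ℤ) : V → V := fun v => Fop k1 k2 k3 v + Mop v

/-- `N″(v) = (0, a₁₂, a₁₃, −b₂, −b₃, 0)`;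
`e″ = ∂/∂x + ξ₂∂/∂ξ₁ + ξ₃∂/∂ξ₂` acts by `E″ = E + N″`. -/
def N''op : V → V := fun v => ![0, v 0, v 1, -v 4, -v 5, 0]

/-- `M″(v) = (2a₁₃, 2a₂₃, 0, 0, −2b₁, −2b₂)`;
`f″ = ∂/∂y + 2η₁∂/∂η₂ + 2η₂∂/∂η₃` acts by `F″ = F + M″`. -/
def M''op : V → V := fun v => ![(2 : ℂ) • v 1, (2 : ℂ) • v 2, 0, 0, -((2 : ℂ) • v 3), -((2 : ℂ) • v 4)]

/-- The action `E″ = E + N″` of `e″`. -/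
def E''op : V → V := fun v => Eop v + N''op v

/-- The action `F″ = F + M″` of `f″`. -/
def F''op (k1 k2 k3 : ℤ) : V → V := fun v => Fop k1 k2 k3 v + M''op v


/-!
Modulo `B`, a cochain is determined by finitely many coefficients: those of `x^n` for
`-3 ≤ n < 0` in `a₁₂, a₁₃, a₂₃`, for `-4 ≤ n < 0` in `b₁, b₂, b₃`, together with three linear
combinations of the coefficients of `x⁻⁵` and `x⁻⁴` (`mem_B_three_iff`). The conditions
`E″z ∈ B`, `F″z ∈ B` are linear equations in these coefficients, and solving them shows that
an invariant `z` whose `x⁻²`-coefficient in `a₁₃` vanishes lies in `B`. Since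
`w = invariantCocycle` is invariant and has `x⁻²`-coefficient `1/2` in `a₁₃`, subtracting a
multiple of `w` reduces every invariant cochain to this case.
-/

lemma coeffL_neg (a : L) (n : ℤ) : coeffL (-a) n = -coeffL a n := rfl

lemma coeffL_sub (a b : L) (n : ℤ) : coeffL (a - b) n = coeffL a n - coeffL b n := rfl

lemma coeffL_T (m n : ℤ) : coeffL (T m) n = if m = n then 1 else 0 := T_apply n m

lemma coeffL_smul_T (c : ℂ) (m n : ℤ) : coeffL (c • T m) n = if m = n then c else 0 := by
  rw [coeffL_smul, coeffL_T, mul_ite, mul_one, mul_zero]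

lemma coeffL_T_mul (m : ℤ) (p : L) (n : ℤ) : coeffL (T m * p) n = coeffL p (n - m) := by
  unfold coeffL T
  erw [AddMonoidAlgebra.coeff_single_mul_apply, one_mul, sub_eq_neg_add]

lemma coeffL_D (p : L) (n : ℤ) : coeffL (D p) n = ((n + 1 : ℤ) : ℂ) * coeffL p (n + 1) := by
  have hsum : coeffL (D p) n = (AddMonoidAlgebra.coeff p).sum
      fun m a => coeffL (((m : ℂ) * a) • T (m - 1)) n := by
    unfold D coeffL
    erw [AddMonoidAlgebra.coeff_finsuppSum, Finsupp.sum_apply]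
  rw [hsum, Finsupp.sum_eq_single (n + 1)]
  · rw [coeffL_smul_T, if_pos (by ring)]; rfl
  · intro m _ hm
    rw [coeffL_smul_T, if_neg (by omega)]
  · intro _
    rw [mul_zero, zero_smul, coeffL_zero]

lemma ext_coeffL {p q : L} (h : ∀ n, coeffL p n = coeffL q n) : p = q :=
  AddMonoidAlgebra.ext (Finsupp.ext h)

lemma T_mul_T (m n : ℤ) : (T m * T n : L) = T (m + n) := (T_add m n).symm

lemma D_sub (p q : L) : D (p - q) = D p - D q :=
  ext_coeffL fun n => by simp only [coeffL_D, coeffL_sub]; ring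

lemma D_neg (p : L) : D (-p) = -D p :=
  ext_coeffL fun n => by simp only [coeffL_D, coeffL_neg]; ring

lemma D_smul (c : ℂ) (p : L) : D (c • p) = c • D p :=
  ext_coeffL fun n => by simp only [coeffL_D, coeffL_smul]; ring

lemma D_T (m : ℤ) : D (T m) = (m : ℂ) • T (m - 1) :=
  ext_coeffL fun n => by
    rw [coeffL_D, coeffL_T, coeffL_smul_T]
    rcases eq_or_ne m (n + 1) with rfl | h
    · simp
    · rw [if_neg h, if_neg (by omega), mul_zero]

lemma E''op_sub_smul (v w : V) (c : ℂ) : E''op (v - c • w) = E''op v - c • E''op w := by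
  funext i
  fin_cases i <;>
    simp only [E''op, Eop, N''op, Pi.add_apply, Pi.sub_apply, Pi.smul_apply, Fin.reduceFinMk,
      Matrix.cons_val, D_sub, D_smul] <;> module

lemma F''op_sub_smul (k1 k2 k3 : ℤ) (v w : V) (c : ℂ) :
    F''op k1 k2 k3 (v - c • w) = F''op k1 k2 k3 v - c • F''op k1 k2 k3 w := by
  funext i
  fin_cases i <;>
    simp only [F''op, Fop, M''op, Pi.add_apply, Pi.sub_apply, Pi.smul_apply, Fin.reduceFinMk,
      Matrix.cons_val, D_sub, D_smul, mul_sub, mul_smul_comm] <;> module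

section CoeffFormulas

variable (v : V) (n : ℤ)

lemma coeffL_E''op_zero : coeffL (E''op v 0) n = ((n + 1 : ℤ) : ℂ) * coeffL (v 0) (n + 1) := by
  simp only [E''op, Eop, N''op, Pi.add_apply, Matrix.cons_val, coeffL_D, add_zero]

lemma coeffL_E''op_two :
    coeffL (E''op v 2) n = ((n + 1 : ℤ) : ℂ) * coeffL (v 2) (n + 1) + coeffL (v 1) n := by
  simp only [E''op, Eop, N''op, Pi.add_apply, Matrix.cons_val, coeffL_add, coeffL_D]

lemma coeffL_E''op_three :
    coeffL (E''op v 3) n = ((n + 1 : ℤ) : ℂ) * coeffL (v 3) (n + 1) - coeffL (v 4) n := by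
  simp only [E''op, Eop, N''op, Pi.add_apply, Matrix.cons_val, coeffL_add, coeffL_D, coeffL_neg,
    sub_eq_add_neg]

lemma coeffL_E''op_four :
    coeffL (E''op v 4) n = ((n + 1 : ℤ) : ℂ) * coeffL (v 4) (n + 1) - coeffL (v 5) n := by
  simp only [E''op, Eop, N''op, Pi.add_apply, Matrix.cons_val, coeffL_add, coeffL_D, coeffL_neg,
    sub_eq_add_neg]

lemma coeffL_E''op_five : coeffL (E''op v 5) n = ((n + 1 : ℤ) : ℂ) * coeffL (v 5) (n + 1) := by
  simp only [E''op, Eop, N''op, Pi.add_apply, Matrix.cons_val, coeffL_D, add_zero]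

variable (k1 k2 k3 : ℤ)

lemma coeffL_F''op_zero : coeffL (F''op k1 k2 k3 v 0) n =
    2 * coeffL (v 1) n - ((k1 + k2 + n - 3 : ℤ) : ℂ) * coeffL (v 0) (n - 1) := by
  simp only [F''op, Fop, M''op, Pi.add_apply, Matrix.cons_val, coeffL_add, coeffL_sub, coeffL_smul,
    coeffL_T_mul, coeffL_D]
  push_cast; ring_nf

lemma coeffL_F''op_one : coeffL (F''op k1 k2 k3 v 1) n =
    2 * coeffL (v 2) n - ((k1 + k3 + n - 3 : ℤ) : ℂ) * coeffL (v 1) (n - 1) := by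
  simp only [F''op, Fop, M''op, Pi.add_apply, Matrix.cons_val, coeffL_add, coeffL_sub, coeffL_smul,
    coeffL_T_mul, coeffL_D]
  push_cast; ring_nf

lemma coeffL_F''op_three : coeffL (F''op k1 k2 k3 v 3) n =
    k1 * coeffL (v 2) n - ((k2 + k3 + n - 1 : ℤ) : ℂ) * coeffL (v 3) (n - 1) := by
  simp only [F''op, Fop, M''op, Pi.add_apply, Matrix.cons_val, coeffL_sub, coeffL_smul,
    coeffL_T_mul, coeffL_D, add_zero]
  push_cast; ring_nf

lemma coeffL_F''op_four : coeffL (F''op k1 k2 k3 v 4) n =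
    -k2 * coeffL (v 1) n - 2 * coeffL (v 3) n
      - ((k1 + k3 + n - 1 : ℤ) : ℂ) * coeffL (v 4) (n - 1) := by
  simp only [F''op, Fop, M''op, Pi.add_apply, Matrix.cons_val, coeffL_add, coeffL_sub, coeffL_smul,
    coeffL_T_mul, coeffL_D, coeffL_neg]
  push_cast; ring_nf

lemma coeffL_F''op_five : coeffL (F''op k1 k2 k3 v 5) n =
    k3 * coeffL (v 0) n - 2 * coeffL (v 4) n
      - ((k1 + k2 + n - 1 : ℤ) : ℂ) * coeffL (v 5) (n - 1) := by
  simp only [F''op, Fop, M''op, Pi.add_apply, Matrix.cons_val, coeffL_add, coeffL_sub, coeffL_smul,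
    coeffL_T_mul, coeffL_D, coeffL_neg]
  push_cast; ring_nf

end CoeffFormulas
lemma mem_Lminus_T_mul_iff (m : ℤ) (p : L) :
    T m * p ∈ Lminus ↔ ∀ n, -m < n → coeffL p n = 0 := by
  refine ⟨fun h n hn => ?_, fun h n hn => ?_⟩
  · simpa only [coeffL_T_mul, add_sub_cancel_right] using h (n + m) (by omega)
  · exact (coeffL_T_mul m p n).trans (h _ (by omega))

lemma mem_B1_iff (k1 k2 k3 : ℤ) (v : V) : v ∈ B1 k1 k2 k3 ↔
    (∀ n, -(k1 + k2 - 2) < n → coeffL (v 0) n = 0) ∧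
    (∀ n, -(k1 + k3 - 2) < n → coeffL (v 1) n = 0) ∧
    (∀ n, -(k2 + k3 - 2) < n → coeffL (v 2) n = 0) ∧
    (∀ n, -(k2 + k3) < n → coeffL (v 3) n = k1 * coeffL (v 2) (n + 1)) ∧
    (∀ n, -(k1 + k3) < n → coeffL (v 4) n = -k2 * coeffL (v 1) (n + 1)) ∧
    (∀ n, -(k1 + k2) < n → coeffL (v 5) n = k3 * coeffL (v 0) (n + 1)) := by
  simp only [B1, Submodule.mem_inf, Submodule.mem_comap, cndA, cndB, LinearMap.comp_apply,
    LinearMap.mulLeft_apply, LinearMap.sub_apply, LinearMap.smul_apply, LinearMap.proj_apply,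
    mem_Lminus_T_mul_iff, coeffL_sub, coeffL_smul, coeffL_T_mul, sub_neg_eq_add, sub_eq_zero,
    and_assoc]

lemma mem_B_iff_exists_mem_B1 (k1 k2 k3 : ℤ) (v : V) : v ∈ B k1 k2 k3 ↔
    ∃ y ∈ B1 k1 k2 k3, ∀ i, ∀ n < 0, coeffL (v i) n = coeffL (y i) n := by
  refine ⟨fun h => ?_, fun ⟨y, hy, h⟩ =>
    Submodule.mem_sup.mpr ⟨v - y, ?_, y, hy, sub_add_cancel v y⟩⟩
  · obtain ⟨x, hx, y, hy, rfl⟩ := Submodule.mem_sup.mp h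
    refine ⟨y, hy, fun i n hn => ?_⟩
    rw [Pi.add_apply, coeffL_add, Submodule.mem_pi.mp hx i (Set.mem_univ i) n hn, zero_add]
  · exact Submodule.mem_pi.mpr fun i _ n hn => by
      rw [Pi.sub_apply, coeffL_sub, h i n hn, sub_self]

def principalPart (p : L) : L :=
  AddMonoidAlgebra.ofCoeff (Finsupp.filter (· < 0) (AddMonoidAlgebra.coeff p))

lemma coeffL_principalPart (p : L) (n : ℤ) :
    coeffL (principalPart p) n = if n < 0 then coeffL p n else 0 :=
  Finsupp.filter_apply _ _ _

lemma coeffL_principalPart_eq_zero {p : L} {m : ℤ} (hp : ∀ n, m ≤ n → n < 0 → coeffL p n = 0)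
    (n : ℤ) (hn : m ≤ n) : coeffL (principalPart p) n = 0 := by
  rw [coeffL_principalPart]
  split_ifs with h
  exacts [hp n hn h, rfl]

lemma coeffL_principalPart_eq_mul {p q : L} {c : ℂ}
    (hp : ∀ n, -4 ≤ n → n < 0 → coeffL p n = 0) (hq : ∀ n, -3 ≤ n → n < 0 → coeffL q n = 0)
    (hr : coeffL p (-5) = c * coeffL q (-4)) (n : ℤ) (hn : -6 < n) :
    coeffL (principalPart p) n = c * coeffL (principalPart q) (n + 1) := by
  obtain rfl | hn := eq_or_lt_of_le (show -5 ≤ n by omega)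
  · simpa [coeffL_principalPart] using hr
  · rw [coeffL_principalPart_eq_zero hp n (by omega),
      coeffL_principalPart_eq_zero hq (n + 1) (by omega), mul_zero]

lemma mem_B_three_iff (v : V) : v ∈ B 3 3 3 ↔
    (∀ n, -3 ≤ n → n < 0 → coeffL (v 0) n = 0) ∧
    (∀ n, -3 ≤ n → n < 0 → coeffL (v 1) n = 0) ∧
    (∀ n, -3 ≤ n → n < 0 → coeffL (v 2) n = 0) ∧
    (∀ n, -4 ≤ n → n < 0 → coeffL (v 3) n = 0) ∧
    (∀ n, -4 ≤ n → n < 0 → coeffL (v 4) n = 0) ∧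
    (∀ n, -4 ≤ n → n < 0 → coeffL (v 5) n = 0) ∧
    coeffL (v 3) (-5) = 3 * coeffL (v 2) (-4) ∧
    coeffL (v 4) (-5) = -3 * coeffL (v 1) (-4) ∧
    coeffL (v 5) (-5) = 3 * coeffL (v 0) (-4) := by
  rw [mem_B_iff_exists_mem_B1]
  constructor
  · rintro ⟨y, hy, h⟩
    rw [mem_B1_iff] at hy
    norm_num at hy
    obtain ⟨h0, h1, h2, h3, h4, h5⟩ := hy
    refine ⟨fun n _ hn => ?_, fun n _ hn => ?_, fun n _ hn => ?_, fun n _ hn => ?_,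
      fun n _ hn => ?_, fun n _ hn => ?_, ?_, ?_, ?_⟩
    · rw [h 0 n hn, h0 n (by omega)]
    · rw [h 1 n hn, h1 n (by omega)]
    · rw [h 2 n hn, h2 n (by omega)]
    · rw [h 3 n hn, h3 n (by omega), h2 (n + 1) (by omega), mul_zero]
    · rw [h 4 n hn, h4 n (by omega), h1 (n + 1) (by omega), mul_zero, neg_zero]
    · rw [h 5 n hn, h5 n (by omega), h0 (n + 1) (by omega), mul_zero]
    · rw [h 3 _ (by norm_num), h 2 _ (by norm_num), h3 _ (by norm_num)]; rfl
    · rw [h 4 _ (by norm_num), h 1 _ (by norm_num), h4 _ (by norm_num), neg_mul]; rfl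
    · rw [h 5 _ (by norm_num), h 0 _ (by norm_num), h5 _ (by norm_num)]; rfl
  · rintro ⟨h0, h1, h2, h3, h4, h5, r3, r4, r5⟩
    refine ⟨fun i => principalPart (v i), ?_,
      fun i n hn => by rw [coeffL_principalPart, if_pos hn]⟩
    rw [mem_B1_iff]
    exact ⟨fun n hn => coeffL_principalPart_eq_zero h0 n (by omega),
      fun n hn => coeffL_principalPart_eq_zero h1 n (by omega),
      fun n hn => coeffL_principalPart_eq_zero h2 n (by omega),
      fun n hn => coeffL_principalPart_eq_mul h3 h2 r3 n (by omega),
      fun n hn => coeffL_principalPart_eq_mul h4 h1 (by rw [r4]; norm_num) n (by omega),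
      fun n hn => coeffL_principalPart_eq_mul h5 h0 r5 n (by omega)⟩

def invariantCocycle : V :=
  ![T (-3), (1 / 2 : ℂ) • T (-2), (1 / 2 : ℂ) • T (-1),
    (3 / 8 : ℂ) • T (-2), -((3 / 4 : ℂ) • T (-3)), (9 / 4 : ℂ) • T (-4)]

lemma E''op_invariantCocycle :
    E''op invariantCocycle = ![(-3 : ℂ) • T (-4), 0, 0, 0, 0, (-9 : ℂ) • T (-5)] := by
  funext i
  fin_cases i <;> simp only [E''op, Eop, N''op, invariantCocycle, Pi.add_apply,
    Fin.reduceFinMk, Matrix.cons_val, D_T, D_smul, D_neg]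
  all_goals norm_num
  all_goals module

lemma F''op_invariantCocycle :
    F''op 3 3 3 invariantCocycle = ![0, 0, (-3 / 2 : ℂ) • T 0, 0, 0, 0] := by
  funext i
  fin_cases i <;> simp only [F''op, Fop, M''op, invariantCocycle, Pi.add_apply,
    Fin.reduceFinMk, Matrix.cons_val, D_T, D_smul, D_neg, mul_smul_comm, mul_neg, T_mul_T]
  all_goals norm_num
  all_goals module

lemma E''op_invariantCocycle_mem : E''op invariantCocycle ∈ B 3 3 3 := by
  rw [E''op_invariantCocycle, mem_B_three_iff]
  simp only [Matrix.cons_val, coeffL_smul_T, coeffL_zero]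
  norm_num
  constructor <;> intros <;> omega

lemma F''op_invariantCocycle_mem : F''op 3 3 3 invariantCocycle ∈ B 3 3 3 := by
  rw [F''op_invariantCocycle, mem_B_three_iff]
  simp only [Matrix.cons_val, coeffL_smul_T, coeffL_zero]
  norm_num
  intros; omega

lemma invariantCocycle_not_mem : invariantCocycle ∉ B 3 3 3 := fun h => by
  simpa [invariantCocycle, coeffL_T] using ((mem_B_three_iff _).mp h).1 (-3) le_rfl (by norm_num)

lemma a_coeffs_eq_zero_of_invariant {z : V} (hE : E''op z ∈ B 3 3 3)
    (hF : F''op 3 3 3 z ∈ B 3 3 3) (hz : coeffL (z 1) (-2) = 0) :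
    (∀ n, -3 ≤ n → n < 0 → coeffL (z 0) n = 0) ∧
    (∀ n, -3 ≤ n → n < 0 → coeffL (z 1) n = 0) ∧
    (∀ n, -3 ≤ n → n < 0 → coeffL (z 2) n = 0) := by
  obtain ⟨E0, -, E2, -⟩ := (mem_B_three_iff _).mp hE
  obtain ⟨F0, F1, -⟩ := (mem_B_three_iff _).mp hF
  have a2 : coeffL (z 0) (-2) = 0 := by
    simpa [coeffL_E''op_zero] using E0 (-3) (by norm_num) (by norm_num)
  have a1 : coeffL (z 0) (-1) = 0 := by
    simpa [coeffL_E''op_zero] using E0 (-2) (by norm_num) (by norm_num)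
  have b3 : coeffL (z 1) (-3) = 0 := by
    simpa [coeffL_F''op_zero] using F0 (-3) (by norm_num) (by norm_num)
  have a3 : coeffL (z 0) (-3) = 0 := by
    simpa [coeffL_F''op_zero, hz] using F0 (-2) (by norm_num) (by norm_num)
  have b1 : coeffL (z 1) (-1) = 0 := by
    simpa [coeffL_E''op_two] using E2 (-1) (by norm_num) (by norm_num)
  have c3 : coeffL (z 2) (-3) = 0 := by
    simpa [coeffL_F''op_one] using F1 (-3) (by norm_num) (by norm_num)
  have c2 : coeffL (z 2) (-2) = 0 := by
    simpa [coeffL_F''op_one, b3] using F1 (-2) (by norm_num) (by norm_num)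
  have c1 : coeffL (z 2) (-1) = 0 := by
    simpa [coeffL_F''op_one, hz] using F1 (-1) (by norm_num) (by norm_num)
  refine ⟨?_, ?_, ?_⟩ <;> intro n h1 h2 <;> interval_cases n <;> assumption

lemma b_coeffs_eq_zero_of_invariant {z : V} (hE : E''op z ∈ B 3 3 3)
    (hF : F''op 3 3 3 z ∈ B 3 3 3) (hz : coeffL (z 1) (-2) = 0) :
    (∀ n, -4 ≤ n → n < 0 → coeffL (z 3) n = 0) ∧
    (∀ n, -4 ≤ n → n < 0 → coeffL (z 4) n = 0) ∧
    (∀ n, -4 ≤ n → n < 0 → coeffL (z 5) n = 0) := by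
  obtain ⟨A0, A1, A2⟩ := a_coeffs_eq_zero_of_invariant hE hF hz
  obtain ⟨-, -, -, E3, E4, E5, -, -, rE5⟩ := (mem_B_three_iff _).mp hE
  obtain ⟨-, -, -, F3, F4, -⟩ := (mem_B_three_iff _).mp hF
  have p4 : coeffL (z 3) (-4) = 0 := by
    simpa [coeffL_F''op_three, A2 (-3)] using F3 (-3) (by norm_num) (by norm_num)
  have p3 : coeffL (z 3) (-3) = 0 := by
    simpa [coeffL_F''op_three, A2 (-2)] using F3 (-2) (by norm_num) (by norm_num)
  have p2 : coeffL (z 3) (-2) = 0 := by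
    simpa [coeffL_F''op_three, A2 (-1)] using F3 (-1) (by norm_num) (by norm_num)
  have q1 : coeffL (z 4) (-1) = 0 := by
    simpa [coeffL_E''op_three] using E3 (-1) (by norm_num) (by norm_num)
  have e3 := E3 (-2) (by norm_num) (by norm_num)
  have f4 := F4 (-1) (by norm_num) (by norm_num)
  simp only [coeffL_E''op_three, coeffL_F''op_four, A1 (-1) (by norm_num) (by norm_num)] at e3 f4
  norm_num at e3 f4
  have q2 : coeffL (z 4) (-2) = 0 := by linear_combination e3 - f4 / 2
  have p1 : coeffL (z 3) (-1) = 0 := by linear_combination -e3 - q2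
  have q3 : coeffL (z 4) (-3) = 0 := by
    simpa [coeffL_E''op_three, p2] using E3 (-3) (by norm_num) (by norm_num)
  have q4 : coeffL (z 4) (-4) = 0 := by
    simpa [coeffL_F''op_four, A1 (-3), p3] using F4 (-3) (by norm_num) (by norm_num)
  have r1 : coeffL (z 5) (-1) = 0 := by
    simpa [coeffL_E''op_four] using E4 (-1) (by norm_num) (by norm_num)
  have r2 : coeffL (z 5) (-2) = 0 := by
    simpa [coeffL_E''op_five] using E5 (-3) (by norm_num) (by norm_num)
  have r3 : coeffL (z 5) (-3) = 0 := by
    simpa [coeffL_E''op_five] using E5 (-4) (by norm_num) (by norm_num)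
  have r4 : coeffL (z 5) (-4) = 0 := by
    simpa [coeffL_E''op_five, coeffL_E''op_zero, A0 (-3)] using rE5
  refine ⟨?_, ?_, ?_⟩ <;> intro n h1 h2 <;> interval_cases n <;> assumption

lemma mem_B_of_invariant_of_coeffL_eq_zero {z : V} (hE : E''op z ∈ B 3 3 3)
    (hF : F''op 3 3 3 z ∈ B 3 3 3) (hz : coeffL (z 1) (-2) = 0) : z ∈ B 3 3 3 := by
  obtain ⟨A0, A1, A2⟩ := a_coeffs_eq_zero_of_invariant hE hF hz
  obtain ⟨B3, B4, B5⟩ := b_coeffs_eq_zero_of_invariant hE hF hz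
  obtain ⟨-, -, -, F3, -, F5, -, -, rF5⟩ := (mem_B_three_iff _).mp hF
  have rel3 : coeffL (z 3) (-5) = 3 * coeffL (z 2) (-4) := by
    have f3 := F3 (-4) (by norm_num) (by norm_num)
    simp only [coeffL_F''op_three] at f3
    norm_num at f3
    linear_combination -f3
  have rel4 : coeffL (z 4) (-5) = -3 * coeffL (z 1) (-4) := by
    simp only [coeffL_F''op_five, coeffL_F''op_zero] at rF5
    norm_num at rF5
    linear_combination -rF5 / 2
  have rel5 : coeffL (z 5) (-5) = 3 * coeffL (z 0) (-4) := by
    have f5 := F5 (-4) (by norm_num) (by norm_num)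
    simp only [coeffL_F''op_five, B4 (-4) (by norm_num) (by norm_num)] at f5
    norm_num at f5
    linear_combination -f5
  exact (mem_B_three_iff z).mpr ⟨A0, A1, A2, B3, B4, B5, rel3, rel4, rel5⟩

/-- For `(k₁, k₂, k₃) = (3, 3, 3)`, the 𝔰″-invariant part of `H¹(ℂℙ¹, T₂)` is
one-dimensional, spanned by the class of
`w = (x⁻³, (1/2)x⁻², (1/2)x⁻¹, (3/8)x⁻², −(3/4)x⁻³, (9/4)x⁻⁴)`. -/
theorem stmt_12 (w : V)
    (hw : w = ![T (-3), (1 / 2 : ℂ) • T (-2), (1 / 2 : ℂ) • T (-1),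
      (3 / 8 : ℂ) • T (-2), -((3 / 4 : ℂ) • T (-3)), (9 / 4 : ℂ) • T (-4)]) :
    E''op w ∈ B 3 3 3 ∧ F''op 3 3 3 w ∈ B 3 3 3 ∧ w ∉ B 3 3 3 ∧
    ∀ z : V, E''op z ∈ B 3 3 3 → F''op 3 3 3 z ∈ B 3 3 3 →
      ∃ c : ℂ, z - c • w ∈ B 3 3 3 := by
  obtain rfl : w = invariantCocycle := hw
  refine ⟨E''op_invariantCocycle_mem, F''op_invariantCocycle_mem, invariantCocycle_not_mem,
    fun z hE hF => ⟨2 * coeffL (z 1) (-2), mem_B_of_invariant_of_coeffL_eq_zero ?_ ?_ ?_⟩⟩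
  · rw [E''op_sub_smul]
    exact sub_mem hE (Submodule.smul_mem _ _ E''op_invariantCocycle_mem)
  · rw [F''op_sub_smul]
    exact sub_mem hF (Submodule.smul_mem _ _ F''op_invariantCocycle_mem)
  · simp [invariantCocycle, coeffL_sub, coeffL_smul, coeffL_T]
    ring
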